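/- Let 1 ≤ p ≤ 2. Suppose that for some z_0 ∈ ℂ every solution of the vector equation (1v) at z_0 belongs to l^p_n and every solution of the vector equation (2v) at z_0 belongs to l^p_n. Then for every z ∈ ℂ, every solution of (1v) at z belongs to l^p_n and every solution of (2v) at z belongs to l^p_n. -/

import Mathlib

/-!
Fix matrix solutions `Y₁, Y₂` of (1) and `T₁, T₂` of (2) at `z₀` with initial values
`(E, O), (O, E)` and `(O, E), (-E, O)`. The Wronskian
`T_j A_{j-1,j} Y_{j+1} - T_{j+1} A_{j,j-1} Y_j` is constant for solutions at the same parameter,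
and the four Wronskians of these solutions form the identity; so the block matrix
`[[Y₁_j, Y₂_j], [Y₁_{j+1}, Y₂_{j+1}]]` has an inverse built from the `T`'s. For a solution `u` of
(1v) at `z` this is variation of constants: `u_j = Y₁_j α_j + Y₂_j β_j`, where `α, β` are the
Wronskians of `T₁, T₂` with `u`, which change by `(z - z₀) T_{j+1} u_{j+1}` per step.
With `φ = |Y₁| + |Y₂|` and `ψ = |T₁| + |T₂|` in `l^p ⊆ l²` this gives
`|u_j| ≤ φ_j (c + |z - z₀| ∑_{k ≤ j} ψ_k |u_k|)`; since `φψ ∈ l¹`, a discrete Gronwall argument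
bounds the bracket, hence `|u_j| ≤ C φ_j` and `u ∈ l^p`. Solutions of (2v) are the solutions of
(1v) for the conjugate transposed coefficients at `z̄`, which swaps the two hypotheses.
-/

open Matrix Filter
open scoped BigOperators ENNReal

abbrev Mat (n : ℕ) := Matrix (Fin n) (Fin n) ℂ

/-- `Alo b j` is the coefficient `A_{j,j-1}` (so `Alo b 0 = A_{0,-1} = -E` and
`Alo b (j+1) = A_{j+1,j} = b j`). -/
def Alo {n : ℕ} (b : ℕ → Mat n) : ℕ → Mat n
  | 0 => -1
  | j + 1 => b j

/-- `Aup a j` is the coefficient `A_{j-1,j}` (so `Aup a 0 = A_{-1,0} = -E` and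
`Aup a (j+1) = A_{j,j+1} = a j`). -/
def Aup {n : ℕ} (a : ℕ → Mat n) : ℕ → Mat n
  | 0 => -1
  | j + 1 => a j

/-- Matrix equation (1).  Sequences are indexed by `ℕ`, where index `k` represents the
paper index `k - 1` (so index `0` is the paper index `-1`).  Here `d j = A_{j,j}`,
`a j = A_{j,j+1}`, `b j = A_{j+1,j}`. -/
def SolEq1 {n : ℕ} (d a b : ℕ → Mat n) (z : ℂ) (Y : ℕ → Mat n) : Prop :=
  ∀ j : ℕ, Alo b j * Y j + d j * Y (j + 1) + a j * Y (j + 2) = z • Y (j + 1)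

/-- Matrix equation (2), with the same index shift. -/
def SolEq2 {n : ℕ} (d a b : ℕ → Mat n) (z : ℂ) (Y : ℕ → Mat n) : Prop :=
  ∀ j : ℕ, Y j * Aup a j + Y (j + 1) * d j + Y (j + 2) * b j = z • Y (j + 1)

/-- Vector equation (1v), with the same index shift. -/
def SolEq1v {n : ℕ} (d a b : ℕ → Mat n) (z : ℂ) (u : ℕ → Fin n → ℂ) : Prop :=
  ∀ j : ℕ, Alo b j *ᵥ u j + d j *ᵥ u (j + 1) + a j *ᵥ u (j + 2) = z • u (j + 1)

/-- Vector equation (2v) for the row vectors `v_j^*`, with the same index shift. -/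
def SolEq2v {n : ℕ} (d a b : ℕ → Mat n) (z : ℂ) (v : ℕ → Fin n → ℂ) : Prop :=
  ∀ j : ℕ, star (v j) ᵥ* Aup a j + star (v (j + 1)) ᵥ* d j + star (v (j + 2)) ᵥ* b j
    = z • star (v (j + 1))

open Finset

theorem bddAbove_range_of_le_add_mul {R g : ℕ → ℝ} (hR : ∀ j, 0 ≤ R j) (hg : ∀ j, 0 ≤ g j)
    (hgs : Summable g) (h : ∀ j, R (j + 1) ≤ R j + g (j + 1) * R (j + 1)) :
    BddAbove (Set.range R) := by
  obtain ⟨N, hN⟩ := eventually_atTop.1 <|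
    hgs.tendsto_atTop_zero.eventually (ge_mem_nhds one_half_pos)
  have step : ∀ j ≥ N, R (j + 1) ≤ R j * Real.exp (2 * g (j + 1)) := by
    intro j hj
    have hgj : g (j + 1) ≤ 1 / 2 := hN (j + 1) (by omega)
    -- `(1 - g) (1 + 2 g) ≥ 1` as long as `0 ≤ g ≤ 1/2`
    calc R (j + 1) ≤ R (j + 1) * (1 - g (j + 1)) * (2 * g (j + 1) + 1) := by
          have : 0 ≤ 1 - 2 * g (j + 1) := by linarith
          nlinarith [mul_nonneg (hR (j + 1)) (mul_nonneg (hg (j + 1)) this)]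
      _ ≤ R j * (2 * g (j + 1) + 1) := by
          gcongr
          · linarith [hg (j + 1)]
          · linarith [h j]
      _ ≤ R j * Real.exp (2 * g (j + 1)) := by gcongr; exacts [hR j, Real.add_one_le_exp _]
  have tail : ∀ j ≥ N, R j ≤ R N * Real.exp (2 * ∑ k ∈ range (j + 1), g k) := by
    refine Nat.le_induction ?_ fun j hj ih => ?_
    · exact le_mul_of_one_le_right (hR N)
        (Real.one_le_exp (mul_nonneg zero_le_two (sum_nonneg fun k _ => hg k)))
    · calc R (j + 1) ≤ R j * Real.exp (2 * g (j + 1)) := step j hj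
        _ ≤ R N * Real.exp (2 * ∑ k ∈ range (j + 1), g k) * Real.exp (2 * g (j + 1)) := by
          gcongr
        _ = R N * Real.exp (2 * ∑ k ∈ range (j + 1 + 1), g k) := by
          rw [mul_assoc, ← Real.exp_add, sum_range_succ _ (j + 1), mul_add]
  refine (isBoundedUnder_of_eventually_le (a := R N * Real.exp (2 * ∑' k, g k)) ?_).bddAbove_range
  filter_upwards [eventually_ge_atTop N] with j hj
  refine (tail j hj).trans ?_
  gcongr
  · exact hR N
  · exact hgs.sum_le_tsum _ fun k _ => hg k

theorem exists_le_mul_of_le_mul_add_sum {φ ψ x : ℕ → ℝ} {c K : ℝ} (hφ : ∀ j, 0 ≤ φ j)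
    (hψ : ∀ j, 0 ≤ ψ j) (hx : ∀ j, 0 ≤ x j) (hc : 0 ≤ c) (hK : 0 ≤ K)
    (hφψ : Summable fun j => φ j * ψ j)
    (h : ∀ j, x j ≤ φ j * (c + K * ∑ k ∈ range (j + 1), ψ k * x k)) :
    ∃ C, ∀ j, x j ≤ C * φ j := by
  set R : ℕ → ℝ := fun j => c + K * ∑ k ∈ range (j + 1), ψ k * x k with hRdef
  have hR : ∀ j, 0 ≤ R j := fun j => by
    have := sum_nonneg fun k (_ : k ∈ range (j + 1)) => mul_nonneg (hψ k) (hx k)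
    positivity
  have hrec : ∀ j, R (j + 1) ≤ R j + K * (φ (j + 1) * ψ (j + 1)) * R (j + 1) := fun j =>
    calc R (j + 1) = R j + K * ψ (j + 1) * x (j + 1) := by
          simp only [hRdef, sum_range_succ _ (j + 1)]; ring
      _ ≤ R j + K * ψ (j + 1) * (φ (j + 1) * R (j + 1)) := by
          gcongr
          · exact mul_nonneg hK (hψ _)
          · exact h (j + 1)
      _ = R j + K * (φ (j + 1) * ψ (j + 1)) * R (j + 1) := by ring
  obtain ⟨C, hC⟩ := bddAbove_range_of_le_add_mul hR
    (fun j => mul_nonneg hK (mul_nonneg (hφ j) (hψ j))) (hφψ.mul_left K) hrec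
  exact ⟨C, fun j => (h j).trans <| by
    rw [mul_comm C]; exact mul_le_mul_of_nonneg_left (hC ⟨j, rfl⟩) (hφ j)⟩

section

attribute [local instance] Matrix.linftyOpNormedAddCommGroup

theorem Matrix.linfty_opNorm_le_sum {ι κ α : Type*} [Fintype ι] [Fintype κ]
    [NormedAddCommGroup α] (M : Matrix ι κ α) : ‖M‖ ≤ ∑ i, ∑ k, ‖M i k‖ := by
  rw [Matrix.linfty_opNorm_def]
  refine (NNReal.coe_le_coe.mpr (Finset.sup_le fun i _ =>
    single_le_sum (f := fun i => ∑ k, ‖M i k‖₊) (fun _ _ => bot_le) (mem_univ i))).trans_eq ?_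
  push_cast
  rfl

theorem memℓp_of_forall_apply {ι κ α : Type*} [Fintype ι] [Fintype κ]
    [NormedAddCommGroup α] {p : ℝ≥0∞} {Y : ℕ → Matrix ι κ α}
    (hY : ∀ i k, Memℓp (fun j => Y j i k) p) : Memℓp Y p :=
  (Memℓp.finsetSum _ fun i _ => Memℓp.finsetSum _ fun k _ => (hY i k).norm).mono
    fun j => Matrix.linfty_opNorm_le_sum (Y j)

end

section

variable {n : ℕ} {d a b : ℕ → Mat n}

@[simp] theorem Alo_zero (b : ℕ → Mat n) : Alo b 0 = -1 := rfl
@[simp] theorem Alo_succ (b : ℕ → Mat n) (j : ℕ) : Alo b (j + 1) = b j := rfl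
@[simp] theorem Aup_zero (a : ℕ → Mat n) : Aup a 0 = -1 := rfl
@[simp] theorem Aup_succ (a : ℕ → Mat n) (j : ℕ) : Aup a (j + 1) = a j := rfl

noncomputable def solution1 (d a b : ℕ → Mat n) (z : ℂ) (W₀ W₁ : Mat n) : ℕ → Mat n
  | 0 => W₀
  | 1 => W₁
  | j + 2 => (a j)⁻¹ * (z • solution1 d a b z W₀ W₁ (j + 1)
      - Alo b j * solution1 d a b z W₀ W₁ j - d j * solution1 d a b z W₀ W₁ (j + 1))

noncomputable def solution2 (d a b : ℕ → Mat n) (z : ℂ) (W₀ W₁ : Mat n) : ℕ → Mat n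
  | 0 => W₀
  | 1 => W₁
  | j + 2 => (z • solution2 d a b z W₀ W₁ (j + 1) - solution2 d a b z W₀ W₁ j * Aup a j
      - solution2 d a b z W₀ W₁ (j + 1) * d j) * (b j)⁻¹

@[simp] theorem solution1_zero (z : ℂ) (W₀ W₁ : Mat n) : solution1 d a b z W₀ W₁ 0 = W₀ := rfl
@[simp] theorem solution1_one (z : ℂ) (W₀ W₁ : Mat n) : solution1 d a b z W₀ W₁ 1 = W₁ := rfl
@[simp] theorem solution2_zero (z : ℂ) (W₀ W₁ : Mat n) : solution2 d a b z W₀ W₁ 0 = W₀ := rfl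
@[simp] theorem solution2_one (z : ℂ) (W₀ W₁ : Mat n) : solution2 d a b z W₀ W₁ 1 = W₁ := rfl

theorem solEq1_solution1 (ha : ∀ j, IsUnit (a j)) (z : ℂ) (W₀ W₁ : Mat n) :
    SolEq1 d a b z (solution1 d a b z W₀ W₁) := fun j => by
  rw [solution1, ← Matrix.mul_assoc, Matrix.mul_nonsing_inv _ ((ha j).map Matrix.detMonoidHom),
    Matrix.one_mul]
  abel

theorem solEq2_solution2 (hb : ∀ j, IsUnit (b j)) (z : ℂ) (W₀ W₁ : Mat n) :
    SolEq2 d a b z (solution2 d a b z W₀ W₁) := fun j => by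
  rw [solution2, Matrix.mul_assoc, Matrix.nonsing_inv_mul _ ((hb j).map Matrix.detMonoidHom),
    Matrix.mul_one]
  abel

def wronskian (a b : ℕ → Mat n) (T Y : ℕ → Mat n) (j : ℕ) : Mat n :=
  T j * Aup a j * Y (j + 1) - T (j + 1) * Alo b j * Y j

def wronskianVec (a b : ℕ → Mat n) (T : ℕ → Mat n) (u : ℕ → Fin n → ℂ) (j : ℕ) : Fin n → ℂ :=
  (T j * Aup a j) *ᵥ u (j + 1) - (T (j + 1) * Alo b j) *ᵥ u j

theorem wronskian_zero (T Y : ℕ → Mat n) : wronskian a b T Y 0 = T 1 * Y 0 - T 0 * Y 1 := by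
  rw [wronskian, Aup_zero, Alo_zero]
  noncomm_ring

theorem wronskianVec_zero (T : ℕ → Mat n) (u : ℕ → Fin n → ℂ) :
    wronskianVec a b T u 0 = T 1 *ᵥ u 0 - T 0 *ᵥ u 1 := by
  simp only [wronskianVec, Aup_zero, Alo_zero, Matrix.mul_neg, Matrix.mul_one, Matrix.neg_mulVec]
  abel

theorem SolEq2.wronskian_succ {z : ℂ} {T Y : ℕ → Mat n} (hT : SolEq2 d a b z T)
    (hY : SolEq1 d a b z Y) (j : ℕ) : wronskian a b T Y (j + 1) = wronskian a b T Y j := by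
  have hY' : a j * Y (j + 2) = z • Y (j + 1) - Alo b j * Y j - d j * Y (j + 1) := by
    rw [← hY j]; abel
  have hT' : T (j + 2) * b j = z • T (j + 1) - T j * Aup a j - T (j + 1) * d j := by
    rw [← hT j]; abel
  simp only [wronskian, Aup_succ, Alo_succ]
  rw [Matrix.mul_assoc (T (j + 1)), hY', hT']
  simp only [Matrix.mul_sub, Matrix.sub_mul, Matrix.mul_smul, Matrix.smul_mul, Matrix.mul_assoc]
  abel

theorem SolEq2.wronskian_eq_wronskian_zero {z : ℂ} {T Y : ℕ → Mat n} (hT : SolEq2 d a b z T)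
    (hY : SolEq1 d a b z Y) (j : ℕ) : wronskian a b T Y j = wronskian a b T Y 0 := by
  induction j with
  | zero => rfl
  | succ j ih => rw [hT.wronskian_succ hY, ih]

theorem SolEq2.wronskianVec_succ {z₀ z : ℂ} {T : ℕ → Mat n} {u : ℕ → Fin n → ℂ}
    (hT : SolEq2 d a b z₀ T) (hu : SolEq1v d a b z u) (j : ℕ) :
    wronskianVec a b T u (j + 1)
      = wronskianVec a b T u j + (z - z₀) • (T (j + 1) *ᵥ u (j + 1)) := by
  have hu' : a j *ᵥ u (j + 2) = z • u (j + 1) - Alo b j *ᵥ u j - d j *ᵥ u (j + 1) := by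
    rw [← hu j]; abel
  have hT' : T (j + 2) * b j = z₀ • T (j + 1) - T j * Aup a j - T (j + 1) * d j := by
    rw [← hT j]; abel
  simp only [wronskianVec, Aup_succ, Alo_succ]
  rw [← Matrix.mulVec_mulVec (N := a j), hu', hT']
  simp only [Matrix.mulVec_sub, Matrix.sub_mulVec, Matrix.mulVec_smul, Matrix.smul_mulVec,
    ← Matrix.mulVec_mulVec, sub_smul]
  abel

theorem solution1_mul_solution2 (ha : ∀ j, IsUnit (a j)) (hb : ∀ j, IsUnit (b j)) (z : ℂ) (j : ℕ) :
    solution1 d a b z 1 0 j * (solution2 d a b z 0 1 (j + 1) * Alo b j)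
        + solution1 d a b z 0 1 j * (solution2 d a b z (-1) 0 (j + 1) * Alo b j) = -1 ∧
      solution1 d a b z 1 0 j * (solution2 d a b z 0 1 j * Aup a j)
        + solution1 d a b z 0 1 j * (solution2 d a b z (-1) 0 j * Aup a j) = 0 := by
  set Y₁ := solution1 d a b z 1 0
  set Y₂ := solution1 d a b z 0 1
  set T₁ := solution2 d a b z 0 1
  set T₂ := solution2 d a b z (-1) 0
  have hW : ∀ {T Y : ℕ → Mat n}, SolEq2 d a b z T → SolEq1 d a b z Y →
      -(T (j + 1) * Alo b j) * Y j + T j * Aup a j * Y (j + 1) = T 1 * Y 0 - T 0 * Y 1 :=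
    fun hT hY => by
      rw [← wronskian_zero, ← hT.wronskian_eq_wronskian_zero hY j, wronskian]
      noncomm_ring
  have hY₁ := solEq1_solution1 (b := b) (d := d) ha z 1 0
  have hY₂ := solEq1_solution1 (b := b) (d := d) ha z 0 1
  have hT₁ := solEq2_solution2 (a := a) (d := d) hb z 0 1
  have hT₂ := solEq2_solution2 (a := a) (d := d) hb z (-1) 0
  have hL : fromBlocks (-(T₁ (j + 1) * Alo b j)) (T₁ j * Aup a j)
        (-(T₂ (j + 1) * Alo b j)) (T₂ j * Aup a j) *
      fromBlocks (Y₁ j) (Y₂ j) (Y₁ (j + 1)) (Y₂ (j + 1)) = 1 := by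
    rw [fromBlocks_multiply, hW hT₁ hY₁, hW hT₁ hY₂, hW hT₂ hY₁, hW hT₂ hY₂, ← fromBlocks_one]
    simp
  have hR := mul_eq_one_comm.1 hL
  rw [fromBlocks_multiply, ← fromBlocks_one, fromBlocks_inj] at hR
  refine ⟨?_, hR.2.1⟩
  rw [← neg_eq_iff_eq_neg, ← hR.1]
  noncomm_ring

theorem eq_mulVec_wronskianVec_add (ha : ∀ j, IsUnit (a j)) (hb : ∀ j, IsUnit (b j)) (z : ℂ)
    (u : ℕ → Fin n → ℂ) (j : ℕ) :
    u j = solution1 d a b z 1 0 j *ᵥ wronskianVec a b (solution2 d a b z 0 1) u j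
      + solution1 d a b z 0 1 j *ᵥ wronskianVec a b (solution2 d a b z (-1) 0) u j := by
  obtain ⟨hAlo, hAup⟩ := solution1_mul_solution2 (d := d) ha hb z j
  symm
  calc _ = (solution1 d a b z 1 0 j * (solution2 d a b z 0 1 j * Aup a j)
          + solution1 d a b z 0 1 j * (solution2 d a b z (-1) 0 j * Aup a j)) *ᵥ u (j + 1)
        - (solution1 d a b z 1 0 j * (solution2 d a b z 0 1 (j + 1) * Alo b j)
          + solution1 d a b z 0 1 j * (solution2 d a b z (-1) 0 (j + 1) * Alo b j)) *ᵥ u j := by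
        simp only [wronskianVec, Matrix.mulVec_sub, Matrix.mulVec_mulVec, Matrix.add_mulVec]
        abel
    _ = u j := by rw [hAlo, hAup, Matrix.neg_mulVec]; simp

theorem SolEq1.mulVec {z : ℂ} {Y : ℕ → Mat n} (hY : SolEq1 d a b z Y) (x : Fin n → ℂ) :
    SolEq1v d a b z fun j => Y j *ᵥ x := fun j => by
  simpa only [Matrix.add_mulVec, Matrix.mulVec_mulVec, Matrix.smul_mulVec] using
    congrArg (· *ᵥ x) (hY j)

theorem SolEq2.vecMul {z : ℂ} {T : ℕ → Mat n} (hT : SolEq2 d a b z T) (x : Fin n → ℂ) :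
    SolEq2v d a b z fun j => star (x ᵥ* T j) := fun j => by
  simpa only [star_star, Matrix.vecMul_add, Matrix.vecMul_vecMul, Matrix.vecMul_smul] using
    congrArg (x ᵥ* ·) (hT j)

theorem Alo_conjTranspose (a : ℕ → Mat n) (j : ℕ) : Alo (fun j => (a j)ᴴ) j = (Aup a j)ᴴ := by
  cases j <;> simp

theorem solEq1v_conjTranspose_iff {z : ℂ} {v : ℕ → Fin n → ℂ} :
    SolEq1v (fun j => (d j)ᴴ) (fun j => (b j)ᴴ) (fun j => (a j)ᴴ) (star z) v ↔
      SolEq2v d a b z v := by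
  refine forall_congr' fun j => ?_
  rw [Alo_conjTranspose, ← star_inj]
  simp only [star_add, Matrix.star_mulVec, Matrix.conjTranspose_conjTranspose, star_smul,
    star_star]

theorem solEq2v_conjTranspose_iff {z : ℂ} {v : ℕ → Fin n → ℂ} :
    SolEq2v (fun j => (d j)ᴴ) (fun j => (b j)ᴴ) (fun j => (a j)ᴴ) (star z) v ↔
      SolEq1v d a b z v := by
  simpa only [Matrix.conjTranspose_conjTranspose, star_star] using
    (solEq1v_conjTranspose_iff (d := fun j => (d j)ᴴ) (a := fun j => (b j)ᴴ)
      (b := fun j => (a j)ᴴ) (z := star z) (v := v)).symm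

attribute [local instance] Matrix.linftyOpNormedAddCommGroup

theorem memℓp_solution1 {p : ℝ≥0∞} (ha : ∀ j, IsUnit (a j)) {z : ℂ}
    (h : ∀ u, SolEq1v d a b z u → Memℓp u p) (W₀ W₁ : Mat n) :
    Memℓp (solution1 d a b z W₀ W₁) p :=
  memℓp_of_forall_apply fun i c =>
    (h _ ((solEq1_solution1 ha z W₀ W₁).mulVec (Pi.single c 1))).mono' fun j => by
      rw [Matrix.mulVec_single_one]
      exact norm_le_pi_norm (f := (solution1 d a b z W₀ W₁ j).col c) i

theorem memℓp_solution2 {p : ℝ≥0∞} (hb : ∀ j, IsUnit (b j)) {z : ℂ}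
    (h : ∀ v, SolEq2v d a b z v → Memℓp v p) (W₀ W₁ : Mat n) :
    Memℓp (solution2 d a b z W₀ W₁) p :=
  memℓp_of_forall_apply fun r c =>
    (h _ ((solEq2_solution2 hb z W₀ W₁).vecMul (Pi.single r 1))).mono' fun j => by
      rw [Matrix.single_one_vecMul, norm_star]
      exact norm_le_pi_norm (f := (solution2 d a b z W₀ W₁ j).row r) c

theorem SolEq2.norm_wronskianVec_le {z₀ z : ℂ} {T : ℕ → Mat n} {u : ℕ → Fin n → ℂ}
    (hT : SolEq2 d a b z₀ T) (hu : SolEq1v d a b z u) (j : ℕ) :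
    ‖wronskianVec a b T u j‖
      ≤ ‖wronskianVec a b T u 0‖ + ‖z - z₀‖ * ∑ k ∈ range (j + 1), ‖T k‖ * ‖u k‖ := by
  induction j with
  | zero => exact le_add_of_nonneg_right (by positivity)
  | succ j ih =>
    rw [hT.wronskianVec_succ hu, sum_range_succ, mul_add, ← add_assoc]
    refine (norm_add_le _ _).trans (add_le_add ih ?_)
    rw [norm_smul]
    gcongr
    exact Matrix.linfty_opNorm_mulVec _ _

theorem SolEq1v.norm_le (ha : ∀ j, IsUnit (a j)) (hb : ∀ j, IsUnit (b j)) {z : ℂ}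
    {u : ℕ → Fin n → ℂ} (hu : SolEq1v d a b z u) (z₀ : ℂ) (j : ℕ) :
    ‖u j‖ ≤ (‖solution1 d a b z₀ 1 0 j‖ + ‖solution1 d a b z₀ 0 1 j‖) *
      (‖u 0‖ + ‖u 1‖ + ‖z - z₀‖ * ∑ k ∈ range (j + 1),
        (‖solution2 d a b z₀ 0 1 k‖ + ‖solution2 d a b z₀ (-1) 0 k‖) * ‖u k‖) := by
  set D := ‖u 0‖ + ‖u 1‖ + ‖z - z₀‖ * ∑ k ∈ range (j + 1),
    (‖solution2 d a b z₀ 0 1 k‖ + ‖solution2 d a b z₀ (-1) 0 k‖) * ‖u k‖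
  have hW : ∀ T : ℕ → Mat n, SolEq2 d a b z₀ T →
      (∀ k, ‖T k‖ ≤ ‖solution2 d a b z₀ 0 1 k‖ + ‖solution2 d a b z₀ (-1) 0 k‖) →
      ‖wronskianVec a b T u 0‖ ≤ ‖u 0‖ + ‖u 1‖ → ‖wronskianVec a b T u j‖ ≤ D :=
    fun T hT hTle h0 => (hT.norm_wronskianVec_le hu j).trans <| by
      dsimp only [D]
      gcongr with k
      exact hTle k
  have hW₁ := hW _ (solEq2_solution2 hb z₀ 0 1) (fun k => le_add_of_nonneg_right (norm_nonneg _))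
    (by simp [wronskianVec_zero])
  have hW₂ := hW _ (solEq2_solution2 hb z₀ (-1) 0) (fun k => le_add_of_nonneg_left (norm_nonneg _))
    (by simp [wronskianVec_zero, Matrix.neg_mulVec])
  calc ‖u j‖ = ‖solution1 d a b z₀ 1 0 j *ᵥ wronskianVec a b (solution2 d a b z₀ 0 1) u j
        + solution1 d a b z₀ 0 1 j *ᵥ wronskianVec a b (solution2 d a b z₀ (-1) 0) u j‖ :=
        congrArg _ (eq_mulVec_wronskianVec_add ha hb z₀ u j)
    _ ≤ ‖solution1 d a b z₀ 1 0 j‖ * ‖wronskianVec a b (solution2 d a b z₀ 0 1) u j‖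
        + ‖solution1 d a b z₀ 0 1 j‖ * ‖wronskianVec a b (solution2 d a b z₀ (-1) 0) u j‖ :=
        (norm_add_le _ _).trans
          (add_le_add (Matrix.linfty_opNorm_mulVec _ _) (Matrix.linfty_opNorm_mulVec _ _))
    _ ≤ ‖solution1 d a b z₀ 1 0 j‖ * D + ‖solution1 d a b z₀ 0 1 j‖ * D := by gcongr
    _ = _ := by ring

theorem SolEq1v.memℓp {p : ℝ≥0∞} (hp : p ≤ 2) (ha : ∀ j, IsUnit (a j))
    (hb : ∀ j, IsUnit (b j)) {z₀ : ℂ} (h₁ : ∀ u, SolEq1v d a b z₀ u → Memℓp u p)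
    (h₂ : ∀ v, SolEq2v d a b z₀ v → Memℓp v p) {z : ℂ} {u : ℕ → Fin n → ℂ}
    (hu : SolEq1v d a b z u) : Memℓp u p := by
  set φ : ℕ → ℝ := fun j => ‖solution1 d a b z₀ 1 0 j‖ + ‖solution1 d a b z₀ 0 1 j‖
  set ψ : ℕ → ℝ := fun j => ‖solution2 d a b z₀ 0 1 j‖ + ‖solution2 d a b z₀ (-1) 0 j‖
  have hφ : Memℓp φ p :=
    (memℓp_solution1 ha h₁ 1 0).norm.add (memℓp_solution1 ha h₁ 0 1).norm
  have hψ : Memℓp ψ p :=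
    (memℓp_solution2 hb h₂ 0 1).norm.add (memℓp_solution2 hb h₂ (-1) 0).norm
  have hφ₀ : ∀ j, 0 ≤ φ j := fun j => by positivity
  have hψ₀ : ∀ j, 0 ≤ ψ j := fun j => by positivity
  have hφψ : Summable fun j => φ j * ψ j := by
    have := lp.summable_mul (by simpa using Real.HolderConjugate.two_two)
      (⟨φ, hφ.of_exponent_ge hp⟩ : lp (fun _ => ℝ) 2) ⟨ψ, hψ.of_exponent_ge hp⟩
    simpa [abs_of_nonneg, hφ₀, hψ₀] using this
  obtain ⟨C, hC⟩ := exists_le_mul_of_le_mul_add_sum hφ₀ hψ₀ (fun j => norm_nonneg (u j))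
    (by positivity) (norm_nonneg _) hφψ (hu.norm_le ha hb z₀)
  exact (hφ.const_mul C).mono hC


end

theorem statement11_general {n : ℕ} (d a b : ℕ → Mat n)
    (ha : ∀ j, IsUnit (a j)) (hb : ∀ j, IsUnit (b j))
    (p : ℝ) (hp1 : 1 ≤ p) (hp2 : p ≤ 2) (z0 : ℂ)
    (h1 : ∀ u : ℕ → Fin n → ℂ, SolEq1v d a b z0 u → Summable (fun j : ℕ => ‖u j‖ ^ p))
    (h2 : ∀ v : ℕ → Fin n → ℂ, SolEq2v d a b z0 v → Summable (fun j : ℕ => ‖v j‖ ^ p))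
    (z : ℂ) :
    (∀ u : ℕ → Fin n → ℂ, SolEq1v d a b z u → Summable (fun j : ℕ => ‖u j‖ ^ p)) ∧
    (∀ v : ℕ → Fin n → ℂ, SolEq2v d a b z v → Summable (fun j : ℕ => ‖v j‖ ^ p)) := by
  have hp : (ENNReal.ofReal p).toReal = p := ENNReal.toReal_ofReal (by linarith)
  have hmem : ∀ w : ℕ → Fin n → ℂ, Memℓp w (ENNReal.ofReal p) ↔ Summable fun j => ‖w j‖ ^ p :=
    fun w => by rw [memℓp_gen_iff (by linarith), hp]
  have hp2' : ENNReal.ofReal p ≤ 2 := by simpa using ENNReal.ofReal_le_ofReal hp2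
  simp only [← hmem] at h1 h2 ⊢
  refine ⟨fun u hu => hu.memℓp hp2' ha hb h1 h2, fun v hv => ?_⟩
  exact (solEq1v_conjTranspose_iff.2 hv).memℓp hp2' (fun j => (hb j).star) (fun j => (ha j).star)
    (fun u hu => h2 u (solEq1v_conjTranspose_iff.1 hu))
    (fun w hw => h1 w (solEq2v_conjTranspose_iff.1 hw))

/-- for `1 ≤ p ≤ 2`, if at some `z₀` all solutions of (1v) and all
solutions of (2v) are in `l^p_n`, then this holds for every `z ∈ ℂ`. -/
theorem statement11 {n : ℕ} (hn : 1 ≤ n) (d a b : ℕ → Mat n)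
    (ha : ∀ j, IsUnit (a j)) (hb : ∀ j, IsUnit (b j))
    (p : ℝ) (hp1 : 1 ≤ p) (hp2 : p ≤ 2) (z0 : ℂ)
    (h1 : ∀ u : ℕ → Fin n → ℂ, SolEq1v d a b z0 u → Summable (fun j : ℕ => ‖u j‖ ^ p))
    (h2 : ∀ v : ℕ → Fin n → ℂ, SolEq2v d a b z0 v → Summable (fun j : ℕ => ‖v j‖ ^ p))
    (z : ℂ) :
    (∀ u : ℕ → Fin n → ℂ, SolEq1v d a b z u → Summable (fun j : ℕ => ‖u j‖ ^ p)) ∧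
    (∀ v : ℕ → Fin n → ℂ, SolEq2v d a b z v → Summable (fun j : ℕ => ‖v j‖ ^ p)) :=
  statement11_general d a b ha hb p hp1 hp2 z0 h1 h2 z
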